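/- arXiv:1704.04954 — 2 statements merged into one kernel-verified Lean document; each statement's English description precedes it below -/
import Mathlib

section
/- If y_b(t) solves the averaged bar equation y_b'' + U'(y_b) = (2/d)·(E - (1/2)(y_b')² - U(y_b))·V_c'(y_b)/V_c(y_b) with U smooth, V_c smooth and positive, then the adiabatic invariant J(t) = (E - (1/2)(y_b'(t))² - U(y_b(t)))^{d/2} · V_c(y_b(t)) is constant along the solution. -/
/-- Along solutions of the averaged bar equation the adiabatic invariant
`J = E_p^(d/2) * V_c(y_b)` is constant. -/
theorem adiabatic_invariant_constant (d : ℕ) (hd : 1 ≤ d) (E : ℝ)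
    (U Vc : ℝ → ℝ) (hU : ContDiff ℝ (⊤ : ℕ∞) U) (hVc : ContDiff ℝ (⊤ : ℕ∞) Vc)
    (hVcpos : ∀ y, 0 < Vc y)
    (yb : ℝ → ℝ) (hyb : ContDiff ℝ 2 yb)
    (hode : ∀ t, deriv (deriv yb) t + deriv U (yb t)
      = (2 / (d : ℝ)) * (E - 1 / 2 * (deriv yb t) ^ 2 - U (yb t))
        * deriv Vc (yb t) / Vc (yb t))
    (hEp : ∀ t, 0 < E - 1 / 2 * (deriv yb t) ^ 2 - U (yb t)) :
    ∀ t s : ℝ,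
      (E - 1 / 2 * (deriv yb t) ^ 2 - U (yb t)) ^ ((d : ℝ) / 2) * Vc (yb t)
        = (E - 1 / 2 * (deriv yb s) ^ 2 - U (yb s)) ^ ((d : ℝ) / 2) * Vc (yb s) := by
  set Ep : ℝ → ℝ := fun t => E - 1 / 2 * (deriv yb t) ^ 2 - U (yb t) with hEpdef
  set F : ℝ → ℝ := fun t => Ep t ^ ((d : ℝ) / 2) * Vc (yb t) with hFdef
  have hdpos : (0:ℝ) < (d:ℝ) := by exact_mod_cast hd
  have hy1 : ∀ t, HasDerivAt yb (deriv yb t) t := fun t =>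
    ((hyb.differentiable (by norm_num)).differentiableAt).hasDerivAt
  have hyb' : ContDiff ℝ 1 (deriv yb) := by
    have h : ContDiff ℝ ((1:ℕ) + 1) yb := by exact_mod_cast hyb
    exact (contDiff_succ_iff_deriv.mp h).2.2
  have hy2 : ∀ t, HasDerivAt (deriv yb) (deriv (deriv yb) t) t := fun t =>
    ((hyb'.differentiable (by norm_num)).differentiableAt).hasDerivAt
  have hUd : ∀ x, HasDerivAt U (deriv U x) x := fun x =>
    ((hU.differentiable (by norm_num)).differentiableAt).hasDerivAt
  have hVd : ∀ x, HasDerivAt Vc (deriv Vc x) x := fun x =>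
    ((hVc.differentiable (by norm_num)).differentiableAt).hasDerivAt
  have hEpD : ∀ t, HasDerivAt Ep
      (-(deriv yb t * (deriv (deriv yb) t + deriv U (yb t)))) t := by
    intro t
    have h1 : HasDerivAt (fun t => (deriv yb t) ^ 2)
        (2 * deriv yb t * deriv (deriv yb) t) t := by
      simpa using (hy2 t).fun_pow 2
    have h2 : HasDerivAt (fun t => U (yb t)) (deriv U (yb t) * deriv yb t) t :=
      (hUd (yb t)).comp t (hy1 t)
    have := ((h1.const_mul (1/2:ℝ)).const_sub E).sub h2
    exact this.congr_deriv (by ring)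
  have hFD : ∀ t, HasDerivAt F 0 t := by
    intro t
    have hpos := hEp t
    have hne : Ep t ≠ 0 := ne_of_gt hpos
    have hr : HasDerivAt (fun t => Ep t ^ ((d : ℝ) / 2))
        (((d : ℝ) / 2) * Ep t ^ ((d : ℝ) / 2 - 1)
          * -(deriv yb t * (deriv (deriv yb) t + deriv U (yb t)))) t := by
      have := (hEpD t).rpow_const (p := (d:ℝ)/2) (Or.inl hne)
      convert this using 1
      ring
    have hv : HasDerivAt (fun t => Vc (yb t)) (deriv Vc (yb t) * deriv yb t) t :=
      (hVd (yb t)).comp t (hy1 t)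
    have hprod := hr.mul hv
    refine hprod.congr_deriv ?_
    have hVne : Vc (yb t) ≠ 0 := ne_of_gt (hVcpos (yb t))
    have hEppow : Ep t ^ ((d : ℝ) / 2) = Ep t ^ ((d : ℝ) / 2 - 1) * Ep t := by
      rw [← Real.rpow_add_one hne]
      ring_nf
    rw [hEppow, hode t]
    field_simp
    ring
  have hconst := is_const_of_deriv_eq_zero
    (f := F) (fun t => (hFD t).differentiableAt) (fun t => (hFD t).deriv)
  intro t s
  exact hconst t s
end

section
/- Any C² solution of the stochastic-model stem equation y'' + k·y = (V'(y)/V_c(y))·(1 - (1/2)(y')² - (k/2)y²) with total energy normalization E = 1 conserves the quantity J = (1 - (1/2)(y')² - (k/2)y²)·G(y), where G(y) = exp(∫₀^y V'(s)/V_c(s) ds), assuming V_c > 0. -/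
open intervalIntegral

/-- The stochastic-model stem equation conserves
`J = (1 - (1/2)(y')² - (k/2)y²) · G(y)`. -/
theorem stem_equation_invariant (k : ℝ) (hk : 0 < k)
    (V Vc : ℝ → ℝ) (hV : ContDiff ℝ (⊤ : ℕ∞) V) (hVc : ContDiff ℝ (⊤ : ℕ∞) Vc)
    (hVcpos : ∀ z, 0 < Vc z)
    (y : ℝ → ℝ) (hy : ContDiff ℝ 2 y)
    (hEp : ∀ t, 0 < 1 - 1 / 2 * (deriv y t) ^ 2 - k / 2 * (y t) ^ 2)
    (hode : ∀ t, deriv (deriv y) t + k * y t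
      = deriv V (y t) / Vc (y t)
        * (1 - 1 / 2 * (deriv y t) ^ 2 - k / 2 * (y t) ^ 2)) :
    ∀ t s : ℝ,
      (1 - 1 / 2 * (deriv y t) ^ 2 - k / 2 * (y t) ^ 2)
        * Real.exp (∫ u in (0 : ℝ)..(y t), deriv V u / Vc u)
      = (1 - 1 / 2 * (deriv y s) ^ 2 - k / 2 * (y s) ^ 2)
        * Real.exp (∫ u in (0 : ℝ)..(y s), deriv V u / Vc u) := by
  set f : ℝ → ℝ := fun u => deriv V u / Vc u with hf
  have hfc : Continuous f :=
    (hV.continuous_deriv (by simp)).div hVc.continuous fun z => (hVcpos z).ne'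
  set F : ℝ → ℝ := fun x => ∫ u in (0 : ℝ)..x, f u with hFdef
  have hF : ∀ x, HasDerivAt F (f x) x := by
    intro x
    exact intervalIntegral.integral_hasDerivAt_right
      (hfc.intervalIntegrable _ _)
      (hfc.stronglyMeasurableAtFilter _ _) hfc.continuousAt
  have hy2 : ContDiff ℝ (((1:ℕ):ℕ∞) + 1) y := by exact_mod_cast hy
  have hy1 : Differentiable ℝ y := (contDiff_succ_iff_deriv.mp hy2).1
  have hy' : Differentiable ℝ (deriv y) :=
    (contDiff_succ_iff_deriv.mp hy2).2.2.differentiable (by simp)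
  set E : ℝ → ℝ := fun t => 1 - 1 / 2 * (deriv y t) ^ 2 - k / 2 * (y t) ^ 2 with hEdef
  set J : ℝ → ℝ := fun t => E t * Real.exp (F (y t)) with hJdef
  have hJ : ∀ t, HasDerivAt J 0 t := by
    intro t
    have h2 : HasDerivAt y (deriv y t) t := (hy1 t).hasDerivAt
    have h1 : HasDerivAt (deriv y) (deriv (deriv y) t) t := (hy' t).hasDerivAt
    have hE : HasDerivAt E
        (0 - 1 / 2 * (2 * deriv y t ^ 1 * deriv (deriv y) t)
          - k / 2 * (2 * y t ^ 1 * deriv y t)) t := by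
      exact ((hasDerivAt_const t (1 : ℝ)).sub ((h1.pow 2).const_mul (1 / 2))).sub
        ((h2.pow 2).const_mul (k / 2))
    have hexp : HasDerivAt (fun t => Real.exp (F (y t)))
        (Real.exp (F (y t)) * (f (y t) * deriv y t)) t :=
      (((hF (y t)).comp t h2)).exp
    have hmul := hE.mul hexp
    have hdd : deriv (deriv y) t = f (y t) * E t - k * y t := by
      have := hode t; simp only [hEdef, hf] at *; linarith
    convert hmul using 1
    · rfl
    · rfl
    · rfl
    rw [hdd]; ring
  have hJd : Differentiable ℝ J := fun t => (hJ t).differentiableAt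
  intro t s
  have := is_const_of_deriv_eq_zero hJd (fun x => (hJ x).deriv) t s
  simpa [hJdef, hEdef, hFdef, hf] using this
end
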